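/- arXiv:0805.4319 — 6 statements merged into one kernel-verified Lean document; each statement's English description precedes it below -/
import Mathlib

section
/- Assume the line condition r₁·d − d₁·r = g (with r = r₁ + r₂, d = d₁ + d₂, g = gcd(r, d)). Let r₂′, d₂′ be integers with 0 < r₂′ < r₂, and set r′ = r₁ + r₂′ and d′ = d₁ + d₂′. If d·r′ − r·d′ ≥ g, then d₂′/r₂′ ≤ d/r < d₂/r₂ in ℚ. -/
/-- Key step in the stability of V₂ (Lemma 2.2): for a proper subbundle
V₂′ ⊂ V₂ of rank r₂′ and degree d₂′, with preimage V′ ⊂ V of rank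
r′ = r₁ + r₂′ and degree d′ = d₁ + d₂′, the stability bound
d·r′ − r·d′ ≥ g gives μ(V₂′) ≤ μ(V) < μ(V₂). -/
theorem quot_sub_slope (r₁ r₂ d₁ d₂ r d g : ℤ)
    (hr₁ : 0 < r₁) (hr₂ : 0 < r₂)
    (hr : r = r₁ + r₂) (hd : d = d₁ + d₂)
    (hg : g = Int.gcd r d)
    (hline : r₁ * d - d₁ * r = g)
    (r₂' d₂' r' d' : ℤ) (hr₂'pos : 0 < r₂') (hr₂'lt : r₂' < r₂)
    (hr' : r' = r₁ + r₂') (hd' : d' = d₁ + d₂')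
    (hstab : d * r' - r * d' ≥ g) :
    (d₂' : ℚ) / r₂' ≤ (d : ℚ) / r ∧ (d : ℚ) / r < (d₂ : ℚ) / r₂ := by
  have hrpos : 0 < r := by omega
  have hgpos : 0 < g := by
    rw [hg]
    exact_mod_cast Int.gcd_pos_of_ne_zero_left d (by omega)
  subst hr hd hr' hd'
  -- key integer inequalities
  have h1 : d₂' * (r₁ + r₂) ≤ (d₁ + d₂) * r₂' := by nlinarith [hstab, hline]
  have h2 : (d₁ + d₂) * r₂ < d₂ * (r₁ + r₂) := by nlinarith [hline, hgpos]
  constructor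
  · rw [div_le_div_iff₀ (by exact_mod_cast hr₂'pos) (by exact_mod_cast hrpos)]
    push_cast; exact_mod_cast h1
  · rw [div_lt_div_iff₀ (by exact_mod_cast hrpos) (by exact_mod_cast hr₂)]
    push_cast; exact_mod_cast h2
end

section
/- Assume the line condition r₁·d − d₁·r = g (with r = r₁ + r₂, d = d₁ + d₂, g = gcd(r, d); note g divides r). Let r₂′, d₂′ be integers with 0 < r₂′ ≤ r₂ and m := r₂′·d₂ − r₂·d₂′ ≥ 1. Then r₂ divides the integer r₂′ − (r/g)·m, and r₂′ − (r/g)·m ≤ 0. -/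
/-!
Subtracting the line condition from `d₂·r − r₂·d = r₁·d − d₁·r` gives `d₂·(r/g) − r₂·(d/g) = 1`,
so `r₂` and `d₂` are coprime, and `m·(d₂·(r/g) − r₂·(d/g)) = m` turns into
`d₂·(r₂′ − (r/g)·m) = r₂·(d₂′ − (d/g)·m)`; hence `r₂ ∣ r₂′ − (r/g)·m`.
That integer is `< r₂` because `r/g ≥ 1` and `m ≥ 1`, so being a multiple of `r₂` it is `≤ 0`.
-/

theorem Int.mul_ediv_gcd_sub_mul_ediv_gcd {a b r d : ℤ} (hr : r ≠ 0)
    (h : a * r - b * d = Int.gcd r d) :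
    a * (r / Int.gcd r d) - b * (d / Int.gcd r d) = 1 := by
  have hg : (Int.gcd r d : ℤ) ≠ 0 := by exact_mod_cast (Int.gcd_pos_of_ne_zero_left d hr).ne'
  have hr' := Int.mul_ediv_cancel' (Int.gcd_dvd_left r d)
  have hd' := Int.mul_ediv_cancel' (Int.gcd_dvd_right r d)
  apply mul_left_cancel₀ hg
  linear_combination a * hr' - b * hd' + h

theorem Int.dvd_sub_mul_of_mul_sub_mul_eq_one {a b u v : ℤ} (h : b * u - a * v = 1) (x y : ℤ) :
    a ∣ x - u * (x * b - a * y) := by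
  have hcop : IsCoprime a b := ⟨-v, u, by linear_combination h⟩
  refine hcop.dvd_of_dvd_mul_left ⟨y - v * (x * b - a * y), ?_⟩
  linear_combination -(x * b - a * y) * h

theorem divisibility_trick_general (r₁ r₂ d₁ d₂ r d g : ℤ)
    (hr₁ : 0 < r₁) (hr₂ : 0 < r₂)
    (hr : r = r₁ + r₂) (hd : d = d₁ + d₂)
    (hg : g = Int.gcd r d)
    (hline : r₁ * d - d₁ * r = g)
    (r₂' d₂' m : ℤ) (hr₂'le : r₂' ≤ r₂)
    (hm : m = r₂' * d₂ - r₂ * d₂') (hm1 : 1 ≤ m) :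
    r₂ ∣ (r₂' - (r / g) * m) ∧ r₂' - (r / g) * m ≤ 0 := by
  have hr0 : 0 < r := by omega
  subst hg hm
  have hquot_pos : 0 < r / Int.gcd r d :=
    Int.ediv_pos_of_pos_of_dvd hr0 (Int.natCast_nonneg _) (Int.gcd_dvd_left r d)
  have hbezout : d₂ * (r / Int.gcd r d) - r₂ * (d / Int.gcd r d) = 1 :=
    Int.mul_ediv_gcd_sub_mul_ediv_gcd hr0.ne' (by rw [← hline, hr, hd]; ring)
  have hdvd := Int.dvd_sub_mul_of_mul_sub_mul_eq_one hbezout r₂' d₂'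
  have hlt : r₂' - r / Int.gcd r d * (r₂' * d₂ - r₂ * d₂') < r₂ := by nlinarith
  exact ⟨hdvd, not_lt.1 fun hpos => (Int.le_of_dvd hpos hdvd).not_gt hlt⟩

/-- The divisibility trick in Lemma 2.2: for a proper subsheaf V₂′ ⊂ V₂ of
rank r₂′ and degree d₂′ with m = r₂′·d₂ − r₂·d₂′ ≥ 1, the integer
r₂′ − (r/g)·m is divisible by r₂ and is ≤ 0. -/
theorem divisibility_trick (r₁ r₂ d₁ d₂ r d g : ℤ)
    (hr₁ : 0 < r₁) (hr₂ : 0 < r₂)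
    (hr : r = r₁ + r₂) (hd : d = d₁ + d₂)
    (hg : g = Int.gcd r d)
    (hline : r₁ * d - d₁ * r = g)
    (r₂' d₂' m : ℤ) (hr₂'pos : 0 < r₂') (hr₂'le : r₂' ≤ r₂)
    (hm : m = r₂' * d₂ - r₂ * d₂') (hm1 : 1 ≤ m) :
    r₂ ∣ (r₂' - (r / g) * m) ∧ r₂' - (r / g) * m ≤ 0 :=
  divisibility_trick_general r₁ r₂ d₁ d₂ r d g hr₁ hr₂ hr hd hg hline r₂' d₂' m hr₂'le hm hm1
end

section
/- Assume the line condition r₁·d − d₁·r = g (with r = r₁ + r₂, d = d₁ + d₂, g = gcd(r, d)). Let r₁′, d₁′, r₂′, d₂′ be integers with 0 < r₁′ ≤ r₁, 0 < r₂′ ≤ r₂, d₁′·r₁ ≤ d₁·r₁′, and m := r₂′·d₂ − r₂·d₂′ ≥ 1. Then (d₁′ + d₂′)/(r₁′ + r₂′) < d/r in ℚ. -/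
/-!
Write `δ(a, b) = d·a − b·r`, so that `b / a < d / r` iff `δ(a, b) > 0` for positive ranks.
The slope of `V₁′` is at most that of `V₁`, which the line condition puts strictly below `μ(V)`.
The line condition also says that `μ(V₂)` exceeds `μ(V)` by only `g / (r·r₂)`; since `μ(V₂′) < μ(V₂)`
and `r₂′ ≤ r₂`, `δ(r₂′, d₂′) > −g`, and as `g` divides `δ(r₂′, d₂′)` this forces `μ(V₂′) ≤ μ(V)`.
The slope of `V′` is the mediant of those of `V₁′` and `V₂′`, hence strictly below `μ(V)`.
-/

theorem add_div_add_lt_of_div_lt_of_div_le {K : Type*} [Field K] [LinearOrder K]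
    [IsStrictOrderedRing K] {a₁ a₂ b₁ b₂ c : K} (ha₁ : 0 < a₁) (ha₂ : 0 < a₂)
    (h₁ : b₁ / a₁ < c) (h₂ : b₂ / a₂ ≤ c) : (b₁ + b₂) / (a₁ + a₂) < c := by
  rw [div_lt_iff₀ ha₁] at h₁
  rw [div_le_iff₀ ha₂] at h₂
  rw [div_lt_iff₀ (add_pos ha₁ ha₂)]
  linarith

theorem Int.nonneg_of_dvd_of_neg_abs_lt {g t : ℤ} (hdvd : g ∣ t) (ht : -|g| < t) : 0 ≤ t := by
  by_contra! hneg
  have : |t| < |g| := by rw [abs_of_neg hneg]; linarith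
  exact hneg.ne (Int.eq_zero_of_abs_lt_dvd ((abs_dvd g t).mpr hdvd) this)

theorem sub_slope_le_of_line {r d r₂ d₂ r₂' d₂' g : ℤ} (hr : 0 < r) (hr₂' : 0 < r₂')
    (hr₂'le : r₂' ≤ r₂) (hgr : g ∣ r) (hgd : g ∣ d) (hline : d₂ * r - r₂ * d = g)
    (hsub : 0 < r₂' * d₂ - r₂ * d₂') : d₂' * r ≤ d * r₂' := by
  have hr₂ : 0 < r₂ := hr₂'.trans_le hr₂'le
  have hdvd : g ∣ d * r₂' - d₂' * r := (hgd.mul_right _).sub (hgr.mul_left _)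
  have hkey : r₂ * (d * r₂' - d₂' * r) = (r₂' * d₂ - r₂ * d₂') * r - r₂' * g := by
    linear_combination -r₂' * hline
  have hlower : r₂ * -|g| < r₂ * (d * r₂' - d₂' * r) := by
    rw [hkey]
    nlinarith [neg_abs_le g, le_abs_self g, abs_nonneg g]
  linarith [Int.nonneg_of_dvd_of_neg_abs_lt hdvd (lt_of_mul_lt_mul_left hlower hr₂.le)]

theorem induced_sub_slope_general (r₁ r₂ d₁ d₂ r d g : ℤ)
    (hr₁ : 0 < r₁) (hr₂ : 0 < r₂)
    (hr : r = r₁ + r₂) (hd : d = d₁ + d₂)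
    (hg : g = Int.gcd r d)
    (hline : r₁ * d - d₁ * r = g)
    (r₁' d₁' r₂' d₂' m : ℤ)
    (hr₁'pos : 0 < r₁')
    (hr₂'pos : 0 < r₂') (hr₂'le : r₂' ≤ r₂)
    (hsub1 : d₁' * r₁ ≤ d₁ * r₁')
    (hm : m = r₂' * d₂ - r₂ * d₂') (hm1 : 1 ≤ m) :
    ((d₁' + d₂' : ℚ)) / ((r₁' + r₂' : ℚ)) < (d : ℚ) / r := by
  have hrpos : 0 < r := by omega
  have hgpos : 0 < g := by
    rw [hg]; exact_mod_cast Int.gcd_pos_of_ne_zero_left d hrpos.ne'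
  have hV₁ : (d₁' : ℚ) / r₁' < d / r := by
    have hle : (d₁' : ℚ) / r₁' ≤ d₁ / r₁ := by
      rw [div_le_div_iff₀ (by exact_mod_cast hr₁'pos) (by exact_mod_cast hr₁)]
      exact_mod_cast hsub1
    refine hle.trans_lt ?_
    rw [div_lt_div_iff₀ (by exact_mod_cast hr₁) (by exact_mod_cast hrpos)]
    exact_mod_cast (by linarith : d₁ * r < d * r₁)
  have hV₂ : (d₂' : ℚ) / r₂' ≤ d / r := by
    rw [div_le_div_iff₀ (by exact_mod_cast hr₂'pos) (by exact_mod_cast hrpos)]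
    have hgr : g ∣ r := hg ▸ Int.gcd_dvd_left r d
    have hgd : g ∣ d := hg ▸ Int.gcd_dvd_right r d
    exact_mod_cast sub_slope_le_of_line (r₂ := r₂) (d₂ := d₂) hrpos hr₂'pos hr₂'le hgr hgd
      (by subst hr hd; linarith) (by omega)
  exact add_div_add_lt_of_div_lt_of_div_le (by exact_mod_cast hr₁'pos)
    (by exact_mod_cast hr₂'pos) hV₁ hV₂

/-- Main computation in the converse direction of Lemma 2.2: for subsheaves
V₁′ ⊂ V₁ (rank r₁′, degree d₁′, with μ(V₁′) ≤ μ(V₁)) and a proper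
subsheaf V₂′ ⊂ V₂ (rank r₂′, degree d₂′, with m = r₂′·d₂ − r₂·d₂′ ≥ 1),
the induced subsheaf V′ of V has μ(V′) < μ(V). -/
theorem induced_sub_slope (r₁ r₂ d₁ d₂ r d g : ℤ)
    (hr₁ : 0 < r₁) (hr₂ : 0 < r₂)
    (hr : r = r₁ + r₂) (hd : d = d₁ + d₂)
    (hg : g = Int.gcd r d)
    (hline : r₁ * d - d₁ * r = g)
    (r₁' d₁' r₂' d₂' m : ℤ)
    (hr₁'pos : 0 < r₁') (hr₁'le : r₁' ≤ r₁)
    (hr₂'pos : 0 < r₂') (hr₂'le : r₂' ≤ r₂)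
    (hsub1 : d₁' * r₁ ≤ d₁ * r₁')
    (hm : m = r₂' * d₂ - r₂ * d₂') (hm1 : 1 ≤ m) :
    ((d₁' + d₂' : ℚ)) / ((r₁' + r₂' : ℚ)) < (d : ℚ) / r :=
  induced_sub_slope_general r₁ r₂ d₁ d₂ r d g hr₁ hr₂ hr hd hg hline r₁' d₁' r₂' d₂' m hr₁'pos
    hr₂'pos hr₂'le hsub1 hm hm1
end

section
/- Let g, r₁, r₂, r₁′ be positive integers with r₁′ ≤ r₁ and r₁′ ≤ r₂, and let A ≥ 0 and B ≥ 1 be integers with g dividing A − B, A ≠ B, and A/(r₁′·r₂) + B/(r₁′·r₁) = g/(r₁·r₂) in ℚ. Then A = 0. -/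
/-!
Clearing denominators turns the hypothesis into `A r₁ + B r₂ = g r₁'`, and `g ∣ A - B ≠ 0` gives
`|A - B| ≥ g`. If `B ≥ A + g`, then `g r₁' ≥ A (r₁ + r₂) + g r₂ ≥ A (r₁ + r₂) + g r₁'`, so `A = 0`;
symmetrically `A ≥ B + g` would force `B (r₁ + r₂) ≤ 0`, contradicting `B ≥ 1`.
-/

lemma mul_add_mul_eq_of_div_add_div_eq {K : Type*} [Field K] {a b c r r₁ r₂ : K}
    (hr : r ≠ 0) (hr₁ : r₁ ≠ 0) (hr₂ : r₂ ≠ 0)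
    (h : a / (r * r₂) + b / (r * r₁) = c / (r₁ * r₂)) :
    a * r₁ + b * r₂ = c * r := by
  field_simp at h
  linear_combination h

lemma mul_add_nonpos_of_add_le {R : Type*} [CommRing R] [LinearOrder R] [IsStrictOrderedRing R]
    {a b g r r₁ r₂ : R} (h : a * r₁ + b * r₂ = g * r) (hg : 0 ≤ g) (hr : r ≤ r₂)
    (hr₂ : 0 ≤ r₂) (hab : a + g ≤ b) :
    a * (r₁ + r₂) ≤ 0 := by
  nlinarith [mul_le_mul_of_nonneg_right hab hr₂, mul_le_mul_of_nonneg_left hr hg]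

lemma le_abs_sub_of_dvd_sub {a b g : ℤ} (hdvd : g ∣ a - b) (hne : a ≠ b) : g ≤ |a - b| :=
  Int.le_of_dvd (abs_pos.2 (sub_ne_zero.2 hne)) ((dvd_abs _ _).2 hdvd)

/-- Arithmetic behind surjectivity in Lemma 4.1(2): if A ≥ 0, B ≥ 1 are
integers with g ∣ A − B, A ≠ B, and A/(r₁′r₂) + B/(r₁′r₁) = g/(r₁r₂),
then A = 0. -/
theorem hom_image_surjective (g r₁ r₂ r₁' A B : ℤ)
    (hg : 0 < g) (hr₁ : 0 < r₁) (hr₂ : 0 < r₂) (hr₁' : 0 < r₁')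
    (hle₁ : r₁' ≤ r₁) (hle₂ : r₁' ≤ r₂)
    (hA : 0 ≤ A) (hB : 1 ≤ B)
    (hdvd : g ∣ A - B) (hne : A ≠ B)
    (heq : (A : ℚ) / (r₁' * r₂) + (B : ℚ) / (r₁' * r₁) = (g : ℚ) / (r₁ * r₂)) :
    A = 0 := by
  have hsum : A * r₁ + B * r₂ = g * r₁' := by
    exact_mod_cast mul_add_mul_eq_of_div_add_div_eq (by positivity) (by positivity)
      (by positivity) heq
  rcases le_abs.1 (le_abs_sub_of_dvd_sub hdvd hne) with hAB | hBA
  · have : B * (r₂ + r₁) ≤ 0 :=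
      mul_add_nonpos_of_add_le (by linarith [hsum]) hg.le hle₁ hr₁.le (by linarith : B + g ≤ A)
    nlinarith
  · have : A * (r₁ + r₂) ≤ 0 := mul_add_nonpos_of_add_le hsum hg.le hle₂ hr₂.le (by linarith)
    nlinarith
end

section
/- Assume the line condition r₁·d − d₁·r = g (with r = r₁ + r₂, d = d₁ + d₂, g = gcd(r, d)). Then there exist no integers r₁′, d₁′ with 0 < r₁′ < r₁, d₁′·r₁ ≥ d₁·r₁′, and r₁′·d − r·d₁′ ≥ g. -/
/-- Lemma 4.1(1), injectivity: under the line condition there are no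
integers r₁′, d₁′ with 0 < r₁′ < r₁, d₁′/r₁′ ≥ d₁/r₁ and
r₁′·d − r·d₁′ ≥ g. -/
theorem no_intermediate_image (r₁ r₂ d₁ d₂ r d g : ℤ)
    (hr₁ : 0 < r₁) (hr₂ : 0 < r₂)
    (hr : r = r₁ + r₂) (hd : d = d₁ + d₂)
    (hg : g = Int.gcd r d)
    (hline : r₁ * d - d₁ * r = g) :
    ¬ ∃ r₁' d₁' : ℤ, 0 < r₁' ∧ r₁' < r₁ ∧ d₁' * r₁ ≥ d₁ * r₁' ∧
      r₁' * d - r * d₁' ≥ g := by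
  rintro ⟨r₁', d₁', h1, h2, h3, h4⟩
  have hrpos : 0 < r := by omega
  have hgen : r ≠ 0 := by omega
  have hgpos : 0 < g := by
    rw [hg]
    exact_mod_cast Int.gcd_pos_of_ne_zero_left d hgen
  nlinarith [mul_le_mul_of_nonneg_left h3 (le_of_lt hrpos),
    mul_le_mul_of_nonneg_right h4 (le_of_lt hr₁),
    mul_pos hgpos (sub_pos.mpr h2)]
end

section
/- Assume the line condition r₁·d − d₁·r = g (with r = r₁ + r₂, d = d₁ + d₂, g = gcd(r, d)). Then there exist no integers r₂′, e with 0 < r₂′ < r₂, e·r₂ ≤ d₂·r₂′, and r·e − r₂′·d ≥ g. -/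
/-- Lemma 4.1(1), surjectivity: under the line condition there are no
integers r₂′, e with 0 < r₂′ < r₂, e/r₂′ ≤ d₂/r₂ and r·e − r₂′·d ≥ g. -/
theorem no_intermediate_quotient (r₁ r₂ d₁ d₂ r d g : ℤ)
    (hr₁ : 0 < r₁) (hr₂ : 0 < r₂)
    (hr : r = r₁ + r₂) (hd : d = d₁ + d₂)
    (hg : g = Int.gcd r d)
    (hline : r₁ * d - d₁ * r = g) :
    ¬ ∃ r₂' e : ℤ, 0 < r₂' ∧ r₂' < r₂ ∧ e * r₂ ≤ d₂ * r₂' ∧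
      r * e - r₂' * d ≥ g := by
  rintro ⟨r₂', e, h1, h2, h3, h4⟩
  have hgpos : 0 < g := by
    have hrne : r ≠ 0 := by omega
    have : Int.gcd r d ≠ 0 := by
      simp [Int.gcd_eq_zero_iff, hrne]
    omega
  -- key: r * d₂ - r₂ * d = r₁ * d - d₁ * r = g
  have hkey : r * d₂ - r₂ * d = g := by
    have : r * d₂ - r₂ * d = r₁ * d - d₁ * r := by
      subst hr hd; ring
    linarith [hline]
  -- multiply h4 by r₂ > 0 and h3 by r > 0
  have h5 : r₂ * (r * e - r₂' * d) ≥ r₂ * g := by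
    exact mul_le_mul_of_nonneg_left h4 (le_of_lt hr₂)
  have hrpos : 0 < r := by omega
  have h6 : r * (e * r₂) ≤ r * (d₂ * r₂') := by
    exact mul_le_mul_of_nonneg_left h3 (le_of_lt hrpos)
  have h7 : r₂' * (r * d₂ - r₂ * d) ≥ r₂ * g := by nlinarith
  rw [hkey] at h7
  nlinarith
end
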